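/- arXiv:1901.10861 — 5 statements merged into one kernel-verified Lean document; each statement's English description precedes it below -/
import Mathlib

section
/- Let g, h ∈ ℝ^m be vectors all of whose coordinates are nonzero, and suppose the m ratios g_i/h_i are pairwise distinct. Then the two-dimensional linear span of g and h intersects exactly 2m open orthants of ℝ^m. -/
private lemma sign_pm {x : ℝ} (hx : x ≠ 0) : Real.sign x = 1 ∨ Real.sign x = -1 := by
  rcases lt_or_gt_of_ne hx with hlt | hgt
  · right; exact Real.sign_of_neg hlt
  · left; exact Real.sign_of_pos hgt

private lemma rsign_ne_zero {x : ℝ} (hx : x ≠ 0) : Real.sign x ≠ 0 := by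
  rcases sign_pm hx with h | h <;> rw [h] <;> norm_num

private lemma sign_mul' (x y : ℝ) : Real.sign (x * y) = Real.sign x * Real.sign y := by
  rcases lt_trichotomy x 0 with hx | hx | hx <;>
    rcases lt_trichotomy y 0 with hy | hy | hy <;>
    simp [hx, hy, Real.sign_of_pos, Real.sign_of_neg, Real.sign_zero,
      mul_pos, mul_pos_of_neg_of_neg, mul_neg_of_pos_of_neg, mul_neg_of_neg_of_pos]

private lemma pm_resolve {a b : ℝ} (ha : a = 1 ∨ a = -1) (hb : b = 1 ∨ b = -1)
    (hne : a ≠ b) : a = -b := by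
  rcases ha with ha | ha <;> rcases hb with hb | hb <;> subst ha <;> subst hb <;> norm_num at hne <;> norm_num

private lemma neg_ne_of_pm {b : ℝ} (hb : b = 1 ∨ b = -1) : -b ≠ b := by
  rcases hb with hb | hb <;> subst hb <;> norm_num

private lemma exists_sep {m : ℕ} (hm : 1 ≤ m) (c : Fin m → ℝ) (F : Finset (Fin m))
    (hsep : ∀ i ∈ F, ∀ j ∉ F, c i < c j) :
    ∃ t : ℝ, ∀ i, (i ∈ F → c i < t) ∧ (i ∉ F → t < c i) := by
  by_cases hF : F.Nonempty
  · by_cases hFc : (Finset.univ \ F).Nonempty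
    · have h1 : (F.image c).Nonempty := hF.image c
      have h2 : ((Finset.univ \ F).image c).Nonempty := hFc.image c
      have hab : (F.image c).max' h1 < ((Finset.univ \ F).image c).min' h2 := by
        obtain ⟨i0, hi0, hia⟩ := Finset.mem_image.mp ((F.image c).max'_mem h1)
        obtain ⟨j0, hj0, hjb⟩ := Finset.mem_image.mp
          (((Finset.univ \ F).image c).min'_mem h2)
        rw [← hia, ← hjb]
        exact hsep i0 hi0 j0 (Finset.mem_sdiff.mp hj0).2
      refine ⟨((F.image c).max' h1 + ((Finset.univ \ F).image c).min' h2) / 2,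
        fun i => ⟨fun hi => ?_, fun hi => ?_⟩⟩
      · have hle : c i ≤ (F.image c).max' h1 :=
          Finset.le_max' _ _ (Finset.mem_image_of_mem c hi)
        linarith [hab, hle]
      · have hle : ((Finset.univ \ F).image c).min' h2 ≤ c i := Finset.min'_le _ _
          (Finset.mem_image_of_mem c (Finset.mem_sdiff.mpr ⟨Finset.mem_univ i, hi⟩))
        linarith [hab, hle]
    · have h1 : (F.image c).Nonempty := hF.image c
      refine ⟨(F.image c).max' h1 + 1, fun i => ⟨fun hi => ?_, fun hi => ?_⟩⟩
      · have hle : c i ≤ (F.image c).max' h1 :=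
          Finset.le_max' _ _ (Finset.mem_image_of_mem c hi)
        linarith [hle]
      · exact absurd (Finset.mem_sdiff.mpr ⟨Finset.mem_univ i, hi⟩) (fun hx => hFc ⟨i, hx⟩)
  · have h2 : ((Finset.univ \ F).image c).Nonempty := by
      refine (Finset.Nonempty.image ?_ c)
      exact ⟨⟨0, hm⟩, Finset.mem_sdiff.mpr ⟨Finset.mem_univ _, fun hx => hF ⟨_, hx⟩⟩⟩
    refine ⟨((Finset.univ \ F).image c).min' h2 - 1,
      fun i => ⟨fun hi => absurd ⟨i, hi⟩ hF, fun hi => ?_⟩⟩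
    have hle : ((Finset.univ \ F).image c).min' h2 ≤ c i := Finset.min'_le _ _
      (Finset.mem_image_of_mem c (Finset.mem_sdiff.mpr ⟨Finset.mem_univ i, hi⟩))
    linarith [hle]

theorem stmt_5 {m : ℕ} (hm : 1 ≤ m) (g h : Fin m → ℝ)
    (hg : ∀ i, g i ≠ 0) (hh : ∀ i, h i ≠ 0)
    (hratio : Function.Injective fun i => g i / h i) :
    Set.ncard {S : Fin m → ℝ | (∀ i, S i = 1 ∨ S i = -1) ∧
      ∃ u v : ℝ, ∀ i, Real.sign (u * g i + v * h i) = S i} = 2 * m := by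
  classical
  set c : Fin m → ℝ := fun i => -(g i / h i) with hcdef
  have hc : Function.Injective c := by
    intro i j hij
    exact hratio (neg_injective hij)
  have key : ∀ (u v : ℝ) (i : Fin m), u * g i + v * h i = h i * (v - u * c i) := by
    intro u v i
    have e : g i / h i * h i = g i := div_mul_cancel₀ (g i) (hh i)
    simp only [hcdef]
    linear_combination -u * e
  have keysign : ∀ (u v : ℝ) (i : Fin m),
      Real.sign (u * g i + v * h i) = Real.sign (h i) * Real.sign (v - u * c i) := by
    intro u v i
    rw [key, sign_mul']
  set P : (Fin m → ℝ) → Prop := fun S => ∀ i, S i = 1 ∨ S i = -1 with hPdef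
  set E₁ : Set (Fin m → ℝ) :=
    {S | P S ∧ ∀ i j, c i < c j → S j = Real.sign (h j) → S i = Real.sign (h i)} with hE₁def
  set E₂ : Set (Fin m → ℝ) :=
    {S | P S ∧ ∀ i j, c i < c j → S i = Real.sign (h i) → S j = Real.sign (h j)} with hE₂def
  -- the achievable iff lemma
  have hiff : ∀ (S : Fin m → ℝ), P S → ∀ (u v : ℝ),
      (∀ i, Real.sign (u * g i + v * h i) = S i) →
      ∀ i, (S i = Real.sign (h i) ↔ u * c i < v) := by
    intro S hP u v hu i
    have hne : v - u * c i ≠ 0 := by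
      intro h0
      have h1 := keysign u v i
      rw [h0, Real.sign_zero, mul_zero, hu i] at h1
      rcases hP i with hp | hp <;> rw [hp] at h1 <;> norm_num at h1
    constructor
    · intro hS
      by_contra hlt
      have hneg : v - u * c i < 0 := by
        rcases lt_trichotomy (v - u * c i) 0 with h' | h' | h'
        · exact h'
        · exact absurd h' hne
        · exact absurd (by linarith) hlt
      have h1 := keysign u v i
      rw [hu i, Real.sign_of_neg hneg, hS] at h1
      have : Real.sign (h i) = 0 := by linarith
      exact rsign_ne_zero (hh i) this
    · intro hlt
      have h1 := keysign u v i
      rw [hu i, Real.sign_of_pos (by linarith : (0:ℝ) < v - u * c i), mul_one] at h1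
      exact h1
  -- realizability from E₁
  have real₁ : ∀ S ∈ E₁, ∃ u v : ℝ, ∀ i, Real.sign (u * g i + v * h i) = S i := by
    rintro S ⟨hP, hdown⟩
    set F : Finset (Fin m) := Finset.univ.filter (fun i => S i = Real.sign (h i)) with hFdef
    have hFmem : ∀ i, i ∈ F ↔ S i = Real.sign (h i) := by
      intro i; simp [hFdef]
    have hsep : ∀ i ∈ F, ∀ j ∉ F, c i < c j := by
      intro i hi j hj
      rw [hFmem] at hi hj
      rcases lt_trichotomy (c i) (c j) with h' | h' | h'
      · exact h'
      · exact absurd hi (by rw [hc h']; exact hj)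
      · exact absurd (hdown j i h' hi) hj
    obtain ⟨t, ht⟩ := exists_sep hm c F hsep
    refine ⟨1, t, fun i => ?_⟩
    rw [keysign 1 t i, one_mul]
    by_cases hi : i ∈ F
    · rw [Real.sign_of_pos (by linarith [(ht i).1 hi] : (0:ℝ) < t - c i), mul_one]
      exact ((hFmem i).mp hi).symm
    · rw [Real.sign_of_neg (by linarith [(ht i).2 hi] : t - c i < 0)]
      have hSne : S i ≠ Real.sign (h i) := fun hx => hi ((hFmem i).mpr hx)
      have := pm_resolve (hP i) (sign_pm (hh i)) hSne
      linarith [this]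
  -- negation swaps E₁ and E₂
  have hflipP : ∀ S : Fin m → ℝ, P S → P (-S) := by
    intro S hP i
    rcases hP i with hp | hp <;> simp [hp]
  have hflip : ∀ (S : Fin m → ℝ), P S → ∀ i,
      ((-S) i = Real.sign (h i) ↔ ¬ S i = Real.sign (h i)) := by
    intro S hP i
    constructor
    · intro hx hy
      rw [← hy] at hx
      exact neg_ne_of_pm (hP i) (by simpa using hx)
    · intro hx
      have := pm_resolve (hP i) (sign_pm (hh i)) hx
      simp only [Pi.neg_apply]
      linarith [this]
  have hNE : ∀ S : Fin m → ℝ, S ∈ E₂ ↔ -S ∈ E₁ := by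
    intro S
    constructor
    · rintro ⟨hP, hup⟩
      refine ⟨hflipP S hP, fun i j hij hj => ?_⟩
      rw [hflip S hP] at hj ⊢
      intro hi
      exact hj (hup i j hij hi)
    · rintro ⟨hP', hdown⟩
      have hP : P S := by
        intro i
        rcases hP' i with hp | hp <;> simp only [Pi.neg_apply] at hp
        · right; linarith
        · left; linarith
      refine ⟨hP, fun i j hij hi => ?_⟩
      by_contra hj
      have h2 := hdown i j hij ((hflip S hP j).mpr hj)
      rw [hflip S hP i] at h2
      exact h2 hi
  -- T = E₁ ∪ E₂
  have hT : {S : Fin m → ℝ | (∀ i, S i = 1 ∨ S i = -1) ∧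
      ∃ u v : ℝ, ∀ i, Real.sign (u * g i + v * h i) = S i} = E₁ ∪ E₂ := by
    ext S
    constructor
    · rintro ⟨hP, u, v, hu⟩
      have hif := hiff S hP u v hu
      rcases le_total 0 u with hu0 | hu0
      · left
        refine ⟨hP, fun i j hij hj => ?_⟩
        rw [hif] at hj ⊢
        have : u * c i ≤ u * c j := mul_le_mul_of_nonneg_left hij.le hu0
        linarith
      · right
        refine ⟨hP, fun i j hij hi => ?_⟩
        rw [hif] at hi ⊢
        have : u * c j ≤ u * c i := mul_le_mul_of_nonpos_left hij.le hu0
        linarith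
    · rintro (hS | hS)
      · exact ⟨hS.1, real₁ S hS⟩
      · obtain ⟨u, v, hu⟩ := real₁ (-S) ((hNE S).mp hS)
        refine ⟨hS.1, -u, -v, fun i => ?_⟩
        have : -u * g i + -v * h i = -(u * g i + v * h i) := by ring
        rw [this, Real.sign_neg, hu i]
        simp
  -- rank function
  set rank : Fin m → ℕ := fun i => (Finset.univ.filter fun j => c j < c i).card with hrankdef
  have hrank_lt : ∀ i, rank i < m := by
    intro i
    have : (Finset.univ.filter fun j => c j < c i).card < Finset.univ.card :=
      Finset.card_lt_card ⟨Finset.subset_univ _, fun hsub => by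
        have := hsub (Finset.mem_univ i)
        simp at this⟩
    simpa using this
  have hrank_mono : ∀ i j, c i < c j → rank i < rank j := by
    intro i j hij
    apply Finset.card_lt_card
    constructor
    · intro k hk
      simp only [Finset.mem_filter, Finset.mem_univ, true_and] at hk ⊢
      linarith
    · intro hsub
      have := hsub (by simp [hij] : i ∈ Finset.univ.filter fun k => c k < c j)
      simp at this
  have hrank_surj : ∀ k, k < m → ∃ i, rank i = k := by
    intro k hk
    have hinj : Function.Injective (fun i => (⟨rank i, hrank_lt i⟩ : Fin m)) := by
      intro i j hij
      simp only [Fin.mk.injEq] at hij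
      rcases lt_trichotomy (c i) (c j) with h' | h' | h'
      · exact absurd hij (Nat.ne_of_lt (hrank_mono i j h'))
      · exact hc h'
      · exact absurd hij.symm (Nat.ne_of_lt (hrank_mono j i h'))
    obtain ⟨i, hi⟩ := Finite.injective_iff_surjective.mp hinj ⟨k, hk⟩
    exact ⟨i, congrArg Fin.val hi⟩
  set K : ℕ → (Fin m → ℝ) :=
    fun k i => if rank i < k then Real.sign (h i) else -Real.sign (h i) with hKdef
  have hK_apply : ∀ k i, K k i = if rank i < k then Real.sign (h i) else -Real.sign (h i) :=
    fun k i => rfl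
  have hK_sign : ∀ k i, (K k i = Real.sign (h i) ↔ rank i < k) := by
    intro k i
    rw [hK_apply]
    split_ifs with hr
    · simp [hr]
    · simp only [hr, iff_false]
      exact neg_ne_of_pm (sign_pm (hh i))
  have hK_mem : ∀ k, K k ∈ E₁ := by
    intro k
    constructor
    · intro i
      rw [hK_apply]
      rcases sign_pm (hh i) with hs | hs <;> split_ifs <;> simp [hs]
    · intro i j hij hj
      rw [hK_sign] at hj ⊢
      exact lt_trans (hrank_mono i j hij) hj
  have hE₁_eq : E₁ = K '' (Set.Iic m) := by
    ext S
    constructor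
    · rintro ⟨hP, hdown⟩
      set k := (Finset.univ.filter fun i => S i = Real.sign (h i)).card with hkdef
      have hkm : k ≤ m := le_trans (Finset.card_filter_le _ _) (by simp)
      have hclaim : ∀ i, S i = Real.sign (h i) ↔ rank i < k := by
        intro i
        constructor
        · intro hi
          apply Finset.card_lt_card
          constructor
          · intro j hj
            simp only [Finset.mem_filter, Finset.mem_univ, true_and] at hj ⊢
            exact hdown j i hj hi
          · intro hsub
            have := hsub (by simp [hi] : i ∈ Finset.univ.filter fun j => S j = Real.sign (h j))
            simp at this
        · intro hr
          by_contra hi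
          have hsub : (Finset.univ.filter fun j => S j = Real.sign (h j)) ⊆
              Finset.univ.filter fun j => c j < c i := by
            intro j hj
            simp only [Finset.mem_filter, Finset.mem_univ, true_and] at hj ⊢
            rcases lt_trichotomy (c j) (c i) with h' | h' | h'
            · exact h'
            · exact absurd hj (by rw [← hc h'] at hi; exact hi)
            · exact absurd (hdown i j h' hj) hi
          have h2 := Finset.card_le_card hsub
          have h3 : rank i = (Finset.univ.filter fun j => c j < c i).card := rfl
          omega
      refine ⟨k, hkm, ?_⟩
      funext i
      rw [hK_apply]
      split_ifs with hr
      · exact ((hclaim i).mpr hr).symm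
      · have hi : S i ≠ Real.sign (h i) := fun hx => hr ((hclaim i).mp hx)
        exact (pm_resolve (hP i) (sign_pm (hh i)) hi).symm
    · rintro ⟨k, _, rfl⟩
      exact hK_mem k
  have hK_injOn : Set.InjOn K (Set.Iic m) := by
    have hkey : ∀ a b : ℕ, a ∈ Set.Iic m → b ∈ Set.Iic m → a < b → K a ≠ K b := by
      intro a b ha hb hab he
      obtain ⟨i, hi⟩ := hrank_surj a (lt_of_lt_of_le hab hb)
      have h1 : K a i ≠ Real.sign (h i) := fun hx => by
        rw [hK_sign] at hx
        omega
      have h2 : K b i = Real.sign (h i) := by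
        rw [hK_sign]
        omega
      rw [he] at h1
      exact h1 h2
    intro a ha b hb he
    rcases lt_trichotomy a b with h' | h' | h'
    · exact absurd he (hkey a b ha hb h')
    · exact h'
    · exact absurd he.symm (hkey b a hb ha h')
  have hE₁card : E₁.ncard = m + 1 := by
    rw [hE₁_eq, Set.ncard_image_of_injOn hK_injOn, ← Finset.coe_Iic, Set.ncard_coe_finset,
      Nat.card_Iic]
  have hE₂_eq : E₂ = (fun S : Fin m → ℝ => -S) '' E₁ := by
    ext S
    constructor
    · intro hS
      exact ⟨-S, (hNE S).mp hS, by simp⟩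
    · rintro ⟨S', hS', rfl⟩
      refine (hNE (-S')).mpr ?_
      rw [neg_neg]
      exact hS'
  have hE₂card : E₂.ncard = m + 1 := by
    rw [hE₂_eq, Set.ncard_image_of_injective _ neg_injective, hE₁card]
  have hE₁fin : E₁.Finite := hE₁_eq ▸ (Set.finite_Iic m).image K
  have hE₂fin : E₂.Finite := hE₂_eq ▸ hE₁fin.image _
  have hInter : E₁ ∩ E₂ =
      {(fun i => Real.sign (h i)), (fun i => -Real.sign (h i))} := by
    ext S
    constructor
    · rintro ⟨⟨hP, hdown⟩, ⟨_, hup⟩⟩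
      by_cases hall : ∀ i, S i = Real.sign (h i)
      · left
        funext i
        exact hall i
      · push_neg at hall
        obtain ⟨j, hj⟩ := hall
        have hnone : ∀ i, S i ≠ Real.sign (h i) := by
          intro i hi
          have hij : i ≠ j := fun e => hj (e ▸ hi)
          rcases lt_trichotomy (c i) (c j) with h' | h' | h'
          · exact hj (hup i j h' hi)
          · exact hij (hc h')
          · exact hj (hdown j i h' hi)
        right
        funext i
        exact pm_resolve (hP i) (sign_pm (hh i)) (hnone i)
    · rintro (rfl | rfl)
      · exact ⟨⟨fun i => sign_pm (hh i), fun i j _ _ => rfl⟩,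
          ⟨fun i => sign_pm (hh i), fun i j _ _ => rfl⟩⟩
      · have hP' : P (fun i => -Real.sign (h i)) := by
          intro i
          rcases sign_pm (hh i) with hs | hs <;> simp [hs]
        refine ⟨⟨hP', fun i j _ hj => absurd hj (neg_ne_of_pm (sign_pm (hh j)))⟩,
          ⟨hP', fun i j _ hi => absurd hi (neg_ne_of_pm (sign_pm (hh i)))⟩⟩
  have hIcard : (E₁ ∩ E₂).ncard = 2 := by
    rw [hInter]
    apply Set.ncard_pair
    intro he
    have := congrFun he ⟨0, hm⟩
    have h0 : Real.sign (h ⟨0, hm⟩) = 0 := by linarith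
    exact rsign_ne_zero (hh ⟨0, hm⟩) h0
  have hfin := Set.ncard_union_add_ncard_inter E₁ E₂ hE₁fin hE₂fin
  rw [hT]
  rw [hIcard, hE₁card, hE₂card] at hfin
  omega
end

section
/- Let g, h ∈ ℝ^m have all coordinates nonzero with pairwise distinct ratios g_i/h_i, ordered so that g₁/h₁ < g₂/h₂ < ⋯ < g_m/h_m. For any sign vector S ∈ {−1,+1}^m, the span of g and h intersects the open orthant of S if and only if S or −S arises as the sign vector of u·g − v·h for some u/v lying strictly between two consecutive values g_i/h_i (or outside all of them), with v of appropriate sign; in particular, the number of such realizable sign vectors S is exactly 2m out of the 2^m possible. -/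
/-!
With `r i = g i / h i` we have `u * g i + v * h i = h i * (u * r i + v)`, so a sign vector of the
span is `sign h` times the sign pattern of an affine function at the increasing points `r i`. Such a
pattern is `±` a step pattern `(-1, …, -1, 1, …, 1)`, the all-`-1` one being the negative of the
all-`1` one; this leaves `m` step patterns and their negatives, which are pairwise distinct.
Conversely, `g - c * h` with `c` in the open cell just below `r k` realises the `k`-th step pattern,
and `c` can be taken outside any finite set, which yields `v ≠ 0` and `u / v ≠ r i`.
-/

theorem Real.sign_mul (a b : ℝ) : sign (a * b) = sign a * sign b := by
  rcases lt_trichotomy a 0 with ha | ha | ha <;> rcases lt_trichotomy b 0 with hb | hb | hb <;>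
    simp [sign_of_neg, sign_of_pos, ha, hb, mul_pos_of_neg_of_neg, mul_neg_of_neg_of_pos,
      mul_neg_of_pos_of_neg]

def stepPattern {m : ℕ} (k : ℕ) (i : Fin m) : ℝ := if (i : ℕ) < k then -1 else 1

section StepPattern

variable {m : ℕ}

theorem stepPattern_eq_one_iff {k : ℕ} {i : Fin m} : stepPattern k i = 1 ↔ k ≤ (i : ℕ) := by
  unfold stepPattern; split_ifs <;> norm_num <;> omega

theorem stepPattern_injective : Function.Injective fun k : Fin m => stepPattern (m := m) k := by
  intro k l hkl
  have key : ∀ i : Fin m, (k : ℕ) ≤ i ↔ (l : ℕ) ≤ i := fun i => by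
    rw [← stepPattern_eq_one_iff, ← stepPattern_eq_one_iff,
      show stepPattern k i = stepPattern l i from congrFun hkl i]
  exact Fin.ext (le_antisymm ((key l).2 le_rfl) ((key k).1 le_rfl))

variable {x : Fin m → ℝ}

theorem exists_sign_sub_eq_stepPattern_of_monotone (hx : Monotone x) {c : ℝ} (hc : ∀ i, x i ≠ c) :
    ∃ k ≤ m, ∀ i, Real.sign (x i - c) = stepPattern k i := by
  have hex : ∃ k, ∀ i : Fin m, k ≤ (i : ℕ) → c < x i := ⟨m, fun i hi => absurd i.2 (by omega)⟩
  refine ⟨Nat.find hex, Nat.find_min' hex fun i hi => absurd i.2 (by omega), fun i => ?_⟩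
  unfold stepPattern
  split_ifs with hi
  · obtain ⟨j, hij, hj⟩ : ∃ j : Fin m, (i : ℕ) ≤ j ∧ x j ≤ c := by simpa using Nat.find_min hex hi
    exact Real.sign_of_neg (sub_neg.2 (((hx hij).trans hj).lt_of_ne (hc i)))
  · exact Real.sign_of_pos (sub_pos.2 (Nat.find_spec hex i (not_lt.1 hi)))

theorem exists_sign_affine_eq_stepPattern (hx : Monotone x) {u v : ℝ}
    (hne : ∀ i, u * x i + v ≠ 0) : ∃ k ≤ m,
      (∀ i, Real.sign (u * x i + v) = stepPattern k i) ∨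
      (∀ i, Real.sign (u * x i + v) = -stepPattern k i) := by
  rcases eq_or_ne u 0 with rfl | hu
  · refine ⟨0, Nat.zero_le _, ?_⟩
    simp only [zero_mul, zero_add, stepPattern, Nat.not_lt_zero, if_false]
    rcases lt_trichotomy v 0 with hv | rfl | hv
    · exact .inr fun _ => Real.sign_of_neg hv
    · exact .inl fun i => (hne i (by simp)).elim
    · exact .inl fun _ => Real.sign_of_pos hv
  · obtain ⟨k, hk, hsign⟩ := exists_sign_sub_eq_stepPattern_of_monotone hx (c := -v / u)
      fun i hi => hne i (by rw [hi]; field_simp; ring)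
    have hfactor : ∀ i, Real.sign (u * x i + v) = Real.sign u * stepPattern k i := fun i => by
      rw [← hsign, ← Real.sign_mul]; congr 1; field_simp; ring
    refine ⟨k, hk, ?_⟩
    rcases Real.sign_apply_eq_of_ne_zero u hu with h | h <;> simp [hfactor, h]

theorem exists_fin_sign_affine_eq_stepPattern (hx : Monotone x) (hm : 0 < m) {u v : ℝ}
    (hne : ∀ i, u * x i + v ≠ 0) : ∃ k : Fin m,
      (∀ i, Real.sign (u * x i + v) = stepPattern k i) ∨
      (∀ i, Real.sign (u * x i + v) = -stepPattern k i) := by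
  obtain ⟨k, hk, hsign⟩ := exists_sign_affine_eq_stepPattern hx hne
  rcases hk.lt_or_eq with hk | hkm
  · exact ⟨⟨k, hk⟩, hsign⟩
  · have hflip : ∀ i : Fin m, stepPattern k i = -stepPattern 0 i := by simp [stepPattern, hkm]
    refine ⟨⟨0, hm⟩, ?_⟩
    simpa [hflip, or_comm] using hsign

theorem exists_notMem_sign_sub_eq_stepPattern (hx : StrictMono x) (k : Fin m) {s : Set ℝ}
    (hs : s.Finite) : ∃ c ∉ s, ∀ i, Real.sign (x i - c) = stepPattern k i := by
  obtain ⟨a, hak, hlow⟩ : ∃ a < x k, ∀ i, i < k → x i ≤ a := by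
    rcases k with ⟨_ | j, hk⟩
    · exact ⟨x ⟨0, hk⟩ - 1, by linarith, fun i hi => absurd (Fin.lt_def.1 hi) (Nat.not_lt_zero _)⟩
    · exact ⟨x ⟨j, by omega⟩, hx (Fin.mk_lt_mk.2 j.lt_succ_self),
        fun i hi => hx.monotone (Fin.mk_le_mk.2 (Nat.lt_succ_iff.1 hi))⟩
  obtain ⟨c, ⟨hac, hck⟩, hcs⟩ := ((Set.Ioo_infinite hak).sdiff hs).nonempty
  refine ⟨c, hcs, fun i => ?_⟩
  unfold stepPattern
  split_ifs with hi
  · exact Real.sign_of_neg (sub_neg.2 ((hlow i hi).trans_lt hac))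
  · exact Real.sign_of_pos (sub_pos.2 (hck.trans_le (hx.monotone (not_lt.1 hi))))

end StepPattern

theorem mul_add_mul_eq_mul_div_add {g h : ℝ} (hh : h ≠ 0) (u v : ℝ) :
    u * g + v * h = h * (u * (g / h) + v) := by
  field_simp

theorem ne_zero_of_sign_eq_one_or_neg_one {a : ℝ} (ha : Real.sign a = 1 ∨ Real.sign a = -1) :
    a ≠ 0 := by
  rintro rfl
  norm_num [Real.sign_zero] at ha

/-- The sign vector of `g - c • h` for `c` in the open cell just below the ratio `g k / h k`. -/
noncomputable def cellSign {m : ℕ} (h : Fin m → ℝ) (k : Fin m) (i : Fin m) : ℝ :=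
  Real.sign (h i) * stepPattern k i

section CellSign

variable {m : ℕ} {g h : Fin m → ℝ}

theorem cellSign_eq_one_or_neg_one (hh : ∀ i, h i ≠ 0) (k i : Fin m) :
    cellSign h k i = 1 ∨ cellSign h k i = -1 := by
  unfold cellSign stepPattern
  rcases Real.sign_apply_eq_of_ne_zero _ (hh i) with hs | hs <;> split_ifs <;> simp [hs]

theorem cellSign_injective (hh : ∀ i, h i ≠ 0) : Function.Injective (cellSign h) := fun k l hkl =>
  stepPattern_injective <| funext fun i =>
    mul_left_cancel₀ (by simpa [Real.sign_eq_zero_iff] using hh i) (congrFun hkl i)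

theorem cellSign_ne_neg_cellSign (hh : ∀ i, h i ≠ 0) (k l : Fin m) :
    cellSign h k ≠ -cellSign h l := by
  intro hkl
  have hmax := congrFun hkl (max k l)
  simp only [cellSign, Pi.neg_apply, stepPattern_eq_one_iff.2 (le_max_left k l : k ≤ max k l),
    stepPattern_eq_one_iff.2 (le_max_right k l : l ≤ max k l), mul_one] at hmax
  exact hh _ (Real.sign_eq_zero_iff.1 (by linarith))

variable (hh : ∀ i, h i ≠ 0) (hmono : StrictMono fun i => g i / h i)
include hh hmono

theorem exists_cellSign_eq_sign (hm : 0 < m) {u v : ℝ} (hne : ∀ i, u * g i + v * h i ≠ 0) :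
    ∃ k, (∀ i, Real.sign (u * g i + v * h i) = cellSign h k i) ∨
      (∀ i, Real.sign (u * g i + v * h i) = -cellSign h k i) := by
  have hsign : ∀ i, Real.sign (u * g i + v * h i) =
      Real.sign (h i) * Real.sign (u * (g i / h i) + v) := fun i => by
    rw [mul_add_mul_eq_mul_div_add (hh i), Real.sign_mul]
  obtain ⟨k, hk⟩ := exists_fin_sign_affine_eq_stepPattern hmono.monotone hm (u := u) (v := v)
    fun i h0 => hne i (by rw [mul_add_mul_eq_mul_div_add (hh i), h0, mul_zero])
  refine ⟨k, hk.imp (fun hk i => ?_) (fun hk i => ?_)⟩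
  · rw [hsign, hk, cellSign]
  · rw [hsign, hk, cellSign, mul_neg]

theorem exists_notMem_sign_sub_eq_cellSign (k : Fin m) {s : Set ℝ} (hs : s.Finite) :
    ∃ c ∉ s, ∀ i, Real.sign (g i - c * h i) = cellSign h k i := by
  obtain ⟨c, hcs, hc⟩ := exists_notMem_sign_sub_eq_stepPattern hmono k hs
  refine ⟨c, hcs, fun i => ?_⟩
  rw [cellSign, ← hc, ← Real.sign_mul]
  congr 1
  field_simp [hh i]

theorem setOf_sign_eq_range_cellSign (hm : 0 < m) :
    {S : Fin m → ℝ | (∀ i, S i = 1 ∨ S i = -1) ∧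
      ∃ u v : ℝ, ∀ i, Real.sign (u * g i + v * h i) = S i} =
      Set.range (Sum.elim (cellSign h) (-cellSign h)) := by
  ext S
  simp only [Set.mem_ofPred_eq, Set.Sum.elim_range, Set.mem_union, Set.mem_range, Pi.neg_apply]
  constructor
  · rintro ⟨hS, u, v, huv⟩
    obtain ⟨k, hk | hk⟩ := exists_cellSign_eq_sign hh hmono hm
      fun i => ne_zero_of_sign_eq_one_or_neg_one (huv i ▸ hS i)
    · exact .inl ⟨k, funext fun i => (hk i).symm.trans (huv i)⟩
    · exact .inr ⟨k, funext fun i => by rw [Pi.neg_apply, ← hk i, huv i]⟩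
  · rintro (⟨k, rfl⟩ | ⟨k, rfl⟩) <;>
      obtain ⟨c, -, hc⟩ := exists_notMem_sign_sub_eq_cellSign hh hmono k Set.finite_empty
    · refine ⟨cellSign_eq_one_or_neg_one hh k, 1, -c, fun i => ?_⟩
      rw [← hc, one_mul, neg_mul, ← sub_eq_add_neg]
    · refine ⟨fun i => ?_, -1, c, fun i => ?_⟩
      · rcases cellSign_eq_one_or_neg_one hh k i with h1 | h1 <;> simp [h1]
      · rw [Pi.neg_apply, ← hc, ← Real.sign_neg]
        congr 1
        ring

end CellSign

theorem stmt_6_general {m : ℕ} (hm : 1 ≤ m) (g h : Fin m → ℝ)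
    (hh : ∀ i, h i ≠ 0)
    (hmono : StrictMono fun i => g i / h i) :
    (∀ S : Fin m → ℝ, (∀ i, S i = 1 ∨ S i = -1) →
      ((∃ u v : ℝ, ∀ i, Real.sign (u * g i + v * h i) = S i) ↔
        (∃ u v : ℝ, v ≠ 0 ∧ (∀ i, u / v ≠ g i / h i) ∧
          ((∀ i, Real.sign (u * g i - v * h i) = S i) ∨
           (∀ i, Real.sign (u * g i - v * h i) = -S i))))) ∧
    Set.ncard {S : Fin m → ℝ | (∀ i, S i = 1 ∨ S i = -1) ∧
      ∃ u v : ℝ, ∀ i, Real.sign (u * g i + v * h i) = S i} = 2 * m := by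
  refine ⟨fun S hS => ⟨?_, ?_⟩, ?_⟩
  · rintro ⟨u, v, huv⟩
    obtain ⟨k, hk⟩ := exists_cellSign_eq_sign hh hmono hm
      fun i => ne_zero_of_sign_eq_one_or_neg_one (huv i ▸ hS i)
    obtain ⟨c, hcs, hc⟩ := exists_notMem_sign_sub_eq_cellSign hh hmono k
      ((Set.finite_range fun i => (g i / h i)⁻¹).insert 0)
    simp only [Set.mem_insert_iff, Set.mem_range, not_or, not_exists] at hcs
    refine ⟨1, c, hcs.1, fun i hi => hcs.2 i (by rw [← hi, one_div, inv_inv]), ?_⟩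
    simp only [one_mul, hc]
    exact hk.imp (fun hk i => (hk i).symm.trans (huv i)) fun hk i => by rw [← huv i, hk i, neg_neg]
  · rintro ⟨u, v, -, -, huv | huv⟩
    · exact ⟨u, -v, fun i => by rw [← huv i, neg_mul, ← sub_eq_add_neg]⟩
    · exact ⟨-u, v, fun i => by
        rw [show -u * g i + v * h i = -(u * g i - v * h i) by ring, Real.sign_neg, huv i, neg_neg]⟩
  · rw [setOf_sign_eq_range_cellSign hh hmono hm, Set.ncard_range_of_injective, Nat.card_sum,
      Nat.card_eq_fintype_card, Fintype.card_fin, two_mul]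
    exact (cellSign_injective hh).sumElim (fun _ _ hkl => cellSign_injective hh (neg_injective hkl))
      (cellSign_ne_neg_cellSign hh)

theorem stmt_6 {m : ℕ} (hm : 1 ≤ m) (g h : Fin m → ℝ)
    (hg : ∀ i, g i ≠ 0) (hh : ∀ i, h i ≠ 0)
    (hmono : StrictMono fun i => g i / h i) :
    (∀ S : Fin m → ℝ, (∀ i, S i = 1 ∨ S i = -1) →
      ((∃ u v : ℝ, ∀ i, Real.sign (u * g i + v * h i) = S i) ↔
        (∃ u v : ℝ, v ≠ 0 ∧ (∀ i, u / v ≠ g i / h i) ∧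
          ((∀ i, Real.sign (u * g i - v * h i) = S i) ∨
           (∀ i, Real.sign (u * g i - v * h i) = -S i))))) ∧
    Set.ncard {S : Fin m → ℝ | (∀ i, S i = 1 ∨ S i = -1) ∧
      ∃ u v : ℝ, ∀ i, Real.sign (u * g i + v * h i) = S i} = 2 * m :=
  stmt_6_general hm g h hh hmono
end

section
/- A generic k-dimensional linear subspace of ℝ^m intersects exactly 2·∑_{d=0}^{k−1} binomial(m−1, d) open orthants of ℝ^m. -/
/-!
A sign vector `σ ∈ {±1}ᵐ` is realised by `V` exactly when the open convex cone
`{w ∈ V | σᵢ wᵢ > 0 for all i}` is nonempty. Single out one coordinate functional `g`: every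
pattern of the other `m - 1` coordinates extends to one or two patterns of all `m`, and to two
exactly when its cone meets `ker g` (an open cone meeting `ker g` meets both sides of it, and a
convex cone meeting both sides meets `ker g`). So the count for `m` functionals in general
position on a `k`-dimensional space is the count for `m - 1` of them on the same space plus the
count for their restrictions to `ker g`, which are in general position on a `(k - 1)`-dimensional
space; this Pascal recursion is solved by `2 ∑_{d<k} C(m - 1, d)`.
-/

open Module LinearMap Filter Topology

namespace HyperplaneArrangement

variable {W : Type*} [AddCommGroup W] [Module ℝ W] {ι : Type*}

def signPatterns (f : ι → W →ₗ[ℝ] ℝ) : Set (ι → ℝ) :=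
  {σ | (∀ i, σ i = 1 ∨ σ i = -1) ∧ ∃ w, ∀ i, Real.sign (f i w) = σ i}

def cell (f : ι → W →ₗ[ℝ] ℝ) (σ : ι → ℝ) : Set W :=
  {w | ∀ i, 0 < σ i * f i w}

lemma _root_.Real.sign_eq_iff_pos_mul {s x : ℝ} (hs : s = 1 ∨ s = -1) :
    Real.sign x = s ↔ 0 < s * x := by
  constructor
  · rintro rfl
    refine Real.sign_mul_pos_of_ne_zero x fun hx => ?_
    rw [hx, Real.sign_zero] at hs
    norm_num at hs
  · rcases hs with rfl | rfl <;> intro h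
    · exact Real.sign_of_pos (by linarith)
    · exact Real.sign_of_neg (by linarith)

lemma mem_signPatterns_iff {f : ι → W →ₗ[ℝ] ℝ} {σ : ι → ℝ} :
    σ ∈ signPatterns f ↔ (∀ i, σ i = 1 ∨ σ i = -1) ∧ (cell f σ).Nonempty :=
  and_congr_right fun hσ => exists_congr fun _ => forall_congr' fun i =>
    Real.sign_eq_iff_pos_mul (hσ i)

lemma signPatterns_finite [Finite ι] (f : ι → W →ₗ[ℝ] ℝ) : (signPatterns f).Finite := by
  refine (Set.Finite.pi fun _ => (Set.toFinite {1, -1})).subset fun σ hσ i _ => ?_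
  simpa using hσ.1 i

lemma ncard_signPatterns_of_isEmpty [IsEmpty ι] (f : ι → W →ₗ[ℝ] ℝ) :
    (signPatterns f).ncard = 1 := by
  rw [Set.ncard_eq_one]
  exact ⟨isEmptyElim, Set.eq_singleton_iff_unique_mem.2
    ⟨⟨isEmptyElim, 0, isEmptyElim⟩, fun _ _ => Subsingleton.elim _ _⟩⟩

lemma signPatterns_eq_empty [Subsingleton W] [Nonempty ι] (f : ι → W →ₗ[ℝ] ℝ) :
    signPatterns f = ∅ := by
  refine Set.eq_empty_of_forall_notMem fun σ hσ => ?_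
  obtain ⟨-, w, hw⟩ := mem_signPatterns_iff.1 hσ
  simpa [Subsingleton.elim w 0] using hw (Classical.arbitrary ι)

lemma smul_add_smul_mem_cell {f : ι → W →ₗ[ℝ] ℝ} {σ : ι → ℝ} {v w : W} {a b : ℝ}
    (hv : v ∈ cell f σ) (hw : w ∈ cell f σ) (ha : 0 < a) (hb : 0 < b) :
    a • v + b • w ∈ cell f σ := fun i => by
  have h : σ i * f i (a • v + b • w) = a * (σ i * f i v) + b * (σ i * f i w) := by
    simp only [map_add, map_smul, smul_eq_mul]
    ring
  rw [h]
  exact add_pos (mul_pos ha (hv i)) (mul_pos hb (hw i))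

lemma eventually_add_smul_mem_cell [Finite ι] {f : ι → W →ₗ[ℝ] ℝ} {σ : ι → ℝ} {w : W}
    (hw : w ∈ cell f σ) (u : W) : ∀ᶠ t : ℝ in 𝓝 0, w + t • u ∈ cell f σ := by
  refine eventually_all.2 fun i => ?_
  have hcont : Continuous fun t : ℝ => σ i * f i (w + t • u) := by
    simp only [map_add, map_smul, smul_eq_mul]
    fun_prop
  exact (hcont.tendsto 0).eventually_const_lt (by simpa using hw i)

lemma exists_mem_cell_eq_zero_iff [Finite ι] {f : ι → W →ₗ[ℝ] ℝ} {σ : ι → ℝ} {g : W →ₗ[ℝ] ℝ}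
    (hg : g ≠ 0) :
    (∃ w ∈ cell f σ, g w = 0) ↔ (∃ w ∈ cell f σ, 0 < g w) ∧ ∃ w ∈ cell f σ, g w < 0 := by
  constructor
  · rintro ⟨w, hw, hgw⟩
    obtain ⟨u, hgu⟩ := LinearMap.surjective hg 1
    have hmem := eventually_add_smul_mem_cell hw u
    have hg_add (t : ℝ) : g (w + t • u) = t := by simp [hgw, hgu]
    obtain ⟨t, ht, htpos⟩ := ((hmem.filter_mono nhdsWithin_le_nhds).and
      (self_mem_nhdsWithin : Set.Ioi (0 : ℝ) ∈ 𝓝[>] 0)).exists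
    obtain ⟨s, hs, hsneg⟩ := ((hmem.filter_mono nhdsWithin_le_nhds).and
      (self_mem_nhdsWithin : Set.Iio (0 : ℝ) ∈ 𝓝[<] 0)).exists
    exact ⟨⟨_, ht, (hg_add t).symm ▸ htpos⟩, ⟨_, hs, (hg_add s).symm ▸ hsneg⟩⟩
  · rintro ⟨⟨v, hv, hgv⟩, ⟨w, hw, hgw⟩⟩
    refine ⟨g v • w + (-g w) • v, smul_add_smul_mem_cell hw hv hgv (neg_pos.2 hgw), ?_⟩
    simp only [map_add, map_smul, smul_eq_mul]
    ring

lemma cell_nonempty_iff [Finite ι] {f : ι → W →ₗ[ℝ] ℝ} {σ : ι → ℝ} {g : W →ₗ[ℝ] ℝ} (hg : g ≠ 0) :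
    (cell f σ).Nonempty ↔ (∃ w ∈ cell f σ, 0 < g w) ∨ ∃ w ∈ cell f σ, g w < 0 := by
  constructor
  · rintro ⟨w, hw⟩
    rcases lt_trichotomy (g w) 0 with hneg | hzero | hpos
    · exact .inr ⟨w, hw, hneg⟩
    · exact .inl ((exists_mem_cell_eq_zero_iff hg).1 ⟨w, hw, hzero⟩).1
    · exact .inl ⟨w, hw, hpos⟩
  · rintro (⟨w, hw, -⟩ | ⟨w, hw, -⟩) <;> exact ⟨w, hw⟩

lemma mem_cell_cons {n : ℕ} {f : Fin n → W →ₗ[ℝ] ℝ} {g : W →ₗ[ℝ] ℝ} {σ : Fin n → ℝ} {s : ℝ}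
    {w : W} : w ∈ cell (Fin.cons g f) (Fin.cons s σ) ↔ 0 < s * g w ∧ w ∈ cell f σ := by
  simp only [cell, Set.mem_ofPred_eq, Fin.forall_fin_succ, Fin.cons_zero, Fin.cons_succ]

lemma cons_mem_signPatterns_cons {n : ℕ} {f : Fin n → W →ₗ[ℝ] ℝ} {g : W →ₗ[ℝ] ℝ}
    {σ : Fin n → ℝ} {s : ℝ} (hs : s = 1 ∨ s = -1) :
    Fin.cons s σ ∈ signPatterns (Fin.cons g f) ↔
      (∀ i, σ i = 1 ∨ σ i = -1) ∧ ∃ w ∈ cell f σ, 0 < s * g w := by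
  simp only [mem_signPatterns_iff, Fin.forall_fin_succ, Fin.cons_zero, Fin.cons_succ, hs,
    true_and, Set.Nonempty, mem_cell_cons]
  exact and_congr_right' (exists_congr fun _ => and_comm)

lemma mem_signPatterns_comp_subtype {f : ι → W →ₗ[ℝ] ℝ} {σ : ι → ℝ} (K : Submodule ℝ W) :
    σ ∈ signPatterns (fun i => (f i).comp K.subtype) ↔
      (∀ i, σ i = 1 ∨ σ i = -1) ∧ ∃ w ∈ cell f σ, w ∈ K := by
  rw [mem_signPatterns_iff]
  exact and_congr_right' ⟨fun ⟨w, hw⟩ => ⟨w, hw, w.2⟩, fun ⟨w, hw, hK⟩ => ⟨⟨w, hK⟩, hw⟩⟩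

lemma ncard_eq_ncard_cons_add {α : Type*} {n : ℕ} {A : Set (Fin (n + 1) → α)} (hA : A.Finite)
    {a b : α} (hab : a ≠ b) (h : ∀ τ ∈ A, τ 0 = a ∨ τ 0 = b) :
    A.ncard = {σ | Fin.cons a σ ∈ A}.ncard + {σ | Fin.cons b σ ∈ A}.ncard := by
  have himage (c : α) : Fin.cons c '' {σ | Fin.cons c σ ∈ A} = A ∩ {τ | τ 0 = c} := by
    ext τ
    constructor
    · rintro ⟨σ, hσ, rfl⟩
      exact ⟨hσ, Fin.cons_zero _ _⟩
    · rintro ⟨hτ, rfl⟩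
      exact ⟨Fin.tail τ, by simpa [Fin.cons_self_tail] using hτ, Fin.cons_self_tail τ⟩
  have hsplit : A = A ∩ {τ | τ 0 = a} ∪ A ∩ {τ | τ 0 = b} := by
    rw [← Set.inter_union_distrib_left, eq_comm, Set.inter_eq_left]
    exact h
  have hdisj : Disjoint (A ∩ {τ | τ 0 = a}) (A ∩ {τ | τ 0 = b}) :=
    Set.disjoint_left.2 fun τ ha hb => hab (ha.2.symm.trans hb.2)
  calc A.ncard = (A ∩ {τ | τ 0 = a}).ncard + (A ∩ {τ | τ 0 = b}).ncard := by
        rw [← Set.ncard_union_eq hdisj (hA.subset Set.inter_subset_left)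
          (hA.subset Set.inter_subset_left), ← hsplit]
    _ = _ := by
        rw [← himage, ← himage, Set.ncard_image_of_injective _ (Fin.cons_right_injective _),
          Set.ncard_image_of_injective _ (Fin.cons_right_injective _)]

theorem ncard_signPatterns_cons {n : ℕ} (f : Fin n → W →ₗ[ℝ] ℝ) {g : W →ₗ[ℝ] ℝ} (hg : g ≠ 0) :
    (signPatterns (Fin.cons g f)).ncard =
      (signPatterns f).ncard + (signPatterns fun i => (f i).comp (ker g).subtype).ncard := by
  set P : ℝ → Set (Fin n → ℝ) := fun s => {σ | Fin.cons s σ ∈ signPatterns (Fin.cons g f)}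
  have hpos (σ) : σ ∈ P 1 ↔ (∀ i, σ i = 1 ∨ σ i = -1) ∧ ∃ w ∈ cell f σ, 0 < g w :=
    (cons_mem_signPatterns_cons (.inl rfl)).trans (by simp only [one_mul])
  have hneg (σ) : σ ∈ P (-1) ↔ (∀ i, σ i = 1 ∨ σ i = -1) ∧ ∃ w ∈ cell f σ, g w < 0 :=
    (cons_mem_signPatterns_cons (.inr rfl)).trans (by simp only [neg_one_mul, neg_pos])
  have hunion : P 1 ∪ P (-1) = signPatterns f := by
    ext σ
    rw [Set.mem_union, hpos, hneg, ← and_or_left, mem_signPatterns_iff, cell_nonempty_iff hg]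
  have hinter : P 1 ∩ P (-1) = signPatterns fun i => (f i).comp (ker g).subtype := by
    ext σ
    rw [Set.mem_inter_iff, hpos, hneg, ← and_and_left, mem_signPatterns_comp_subtype]
    simp only [LinearMap.mem_ker, exists_mem_cell_eq_zero_iff hg]
  have hfin : (P 1 ∪ P (-1)).Finite := hunion ▸ signPatterns_finite f
  rw [ncard_eq_ncard_cons_add (signPatterns_finite _) (by norm_num : (1 : ℝ) ≠ -1)
      fun τ hτ => hτ.1 0, ← Set.ncard_union_add_ncard_inter _ _
      (hfin.subset Set.subset_union_left) (hfin.subset Set.subset_union_right), hunion, hinter]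

def InGeneralPosition (f : ι → W →ₗ[ℝ] ℝ) (k : ℕ) : Prop :=
  ∀ J : Finset ι, J.card ≤ k → finrank ℝ ↥(⨅ i ∈ J, ker (f i)) = k - J.card

lemma iInf_ker_comp_subtype (K : Submodule ℝ W) (f : ι → W →ₗ[ℝ] ℝ) (J : Finset ι) :
    ⨅ i ∈ J, ker ((f i).comp K.subtype) = (⨅ i ∈ J, ker (f i)).comap K.subtype := by
  ext
  simp [Submodule.mem_iInf]

lemma finrank_comap_subtype (K X : Submodule ℝ W) :
    finrank ℝ ↥(X.comap K.subtype) = finrank ℝ ↥(K ⊓ X) := by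
  rw [← Submodule.map_comap_subtype]
  exact (Submodule.equivMapOfInjective _ K.injective_subtype _).finrank_eq

lemma iInf_map_succEmb {α : Type*} [CompleteLattice α] {n : ℕ} (t : Fin (n + 1) → α)
    (J : Finset (Fin n)) : ⨅ i ∈ J.map (Fin.succEmb n), t i = ⨅ i ∈ J, t i.succ := by
  rw [← Finset.inf_eq_iInf, ← Finset.inf_eq_iInf, Finset.inf_map]
  rfl

namespace InGeneralPosition

variable {f : ι → W →ₗ[ℝ] ℝ} {k : ℕ}

lemma finrank_eq (hf : InGeneralPosition f k) : finrank ℝ W = k := by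
  have h := hf ∅ (Nat.zero_le k)
  rwa [show ⨅ i ∈ (∅ : Finset ι), ker (f i) = ⊤ by simp, finrank_top] at h

lemma ne_zero (hf : InGeneralPosition f (k + 1)) (i : ι) : f i ≠ 0 := by
  intro hi
  have h := hf {i} (by simp)
  rw [Finset.iInf_singleton, hi, ker_zero, finrank_top, hf.finrank_eq,
    Finset.card_singleton] at h
  omega

lemma of_cons {n : ℕ} {g : W →ₗ[ℝ] ℝ} {f : Fin n → W →ₗ[ℝ] ℝ}
    (hf : InGeneralPosition (Fin.cons g f) k) : InGeneralPosition f k := fun J hJ => by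
  have h := hf (J.map (Fin.succEmb n)) (by rwa [Finset.card_map])
  rwa [iInf_map_succEmb, Finset.card_map] at h

lemma comp_subtype_ker {n : ℕ} {g : W →ₗ[ℝ] ℝ} {f : Fin n → W →ₗ[ℝ] ℝ}
    (hf : InGeneralPosition (Fin.cons g f) (k + 1)) :
    InGeneralPosition (fun i => (f i).comp (ker g).subtype) k := fun J hJ => by
  have h := hf (insert 0 (J.map (Fin.succEmb n))) (by
    grw [Finset.card_insert_le, Finset.card_map, hJ])
  rw [Finset.card_insert_of_notMem (by simp), Finset.iInf_insert, iInf_map_succEmb,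
    Finset.card_map] at h
  rw [iInf_ker_comp_subtype, finrank_comap_subtype]
  exact h.trans (by omega)

end InGeneralPosition

def regionCount : ℕ → ℕ → ℕ
  | 0, _ => 1
  | _ + 1, 0 => 0
  | n + 1, k + 1 => regionCount n (k + 1) + regionCount n k

lemma sum_range_succ_choose_succ (n k : ℕ) :
    ∑ d ∈ Finset.range (k + 1), (n + 1).choose d =
      ∑ d ∈ Finset.range (k + 1), n.choose d + ∑ d ∈ Finset.range k, n.choose d := by
  rw [Finset.sum_range_succ', Finset.sum_range_succ' (fun d => n.choose d)]
  simp only [Nat.choose_succ_succ', Finset.sum_add_distrib, Nat.choose_zero_right]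
  ring

lemma regionCount_succ (n k : ℕ) :
    regionCount (n + 1) k = 2 * ∑ d ∈ Finset.range k, n.choose d := by
  induction n generalizing k with
  | zero => cases k <;> simp [regionCount, Finset.sum_range_succ']
  | succ n ih =>
    cases k with
    | zero => rfl
    | succ k => rw [regionCount, ih, ih, sum_range_succ_choose_succ]; ring

theorem ncard_signPatterns_eq_regionCount [FiniteDimensional ℝ W] {n k : ℕ}
    {f : Fin n → W →ₗ[ℝ] ℝ} (hf : InGeneralPosition f k) :
    (signPatterns f).ncard = regionCount n k := by
  induction n generalizing W k with
  | zero => exact ncard_signPatterns_of_isEmpty f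
  | succ n ih =>
    obtain ⟨g, f, rfl⟩ : ∃ g f', f = Fin.cons g f' :=
      ⟨f 0, Fin.tail f, (Fin.cons_self_tail f).symm⟩
    cases k with
    | zero =>
      have : Subsingleton W := Module.finrank_zero_iff.1 hf.finrank_eq
      rw [signPatterns_eq_empty, Set.ncard_empty, regionCount]
    | succ k =>
      rw [ncard_signPatterns_cons (g := g) f (hf.ne_zero 0), ih hf.of_cons,
        ih hf.comp_subtype_ker, regionCount]

end HyperplaneArrangement

open HyperplaneArrangement

theorem stmt_7_general {m k : ℕ} (hk : 1 ≤ k)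
    (V : Submodule ℝ (Fin m → ℝ))
    (hgen : ∀ J : Finset (Fin m), J.card ≤ k →
      Module.finrank ℝ ↥(V ⊓ ⨅ i ∈ J, LinearMap.ker (LinearMap.proj (R := ℝ)
        (φ := fun _ : Fin m => ℝ) i)) = k - J.card) :
    Set.ncard {S : Fin m → ℝ | (∀ i, S i = 1 ∨ S i = -1) ∧
      ∃ v ∈ V, ∀ i, Real.sign (v i) = S i} =
      2 * ∑ d ∈ Finset.range k, (m - 1).choose d := by
  set f : Fin m → V →ₗ[ℝ] ℝ := fun i => (LinearMap.proj i).comp V.subtype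
  have hf : InGeneralPosition f k := fun J hJ => by
    rw [iInf_ker_comp_subtype, finrank_comap_subtype]
    exact hgen J hJ
  obtain ⟨n, rfl⟩ : ∃ n, m = n + 1 := by
    refine Nat.exists_eq_add_one.2 (lt_of_lt_of_le hk ?_)
    simpa [hf.finrank_eq] using Submodule.finrank_le V
  have hset : {S : Fin (n + 1) → ℝ | (∀ i, S i = 1 ∨ S i = -1) ∧
      ∃ v ∈ V, ∀ i, Real.sign (v i) = S i} = signPatterns f := by
    ext
    simp [signPatterns, f]
  rw [hset, ncard_signPatterns_eq_regionCount hf, regionCount_succ, Nat.add_sub_cancel]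

theorem stmt_7 {m k : ℕ} (hk : 1 ≤ k) (hkm : k ≤ m)
    (V : Submodule ℝ (Fin m → ℝ))
    (hdim : Module.finrank ℝ V = k)
    (hgen : ∀ J : Finset (Fin m), J.card ≤ k →
      Module.finrank ℝ ↥(V ⊓ ⨅ i ∈ J, LinearMap.ker (LinearMap.proj (R := ℝ)
        (φ := fun _ : Fin m => ℝ) i)) = k - J.card) :
    Set.ncard {S : Fin m → ℝ | (∀ i, S i = 1 ∨ S i = -1) ∧
      ∃ v ∈ V, ∀ i, Real.sign (v i) = S i} =
      2 * ∑ d ∈ Finset.range k, (m - 1).choose d :=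
  stmt_7_general hk V hgen
end

section
/- Any arrangement of m hyperplanes in ℝ^n partitions the complement of their union into at most ∑_{i=0}^{n} binomial(m, i) connected open regions. -/
open Finset

private def Pp {m n : ℕ} (a : Fin m → Fin n → ℝ) (b : Fin m → ℝ) (σ : Fin m → Bool) : Prop :=
  ∃ x : Fin n → ℝ, ∀ i, if σ i then b i < ∑ j, a i j * x j else ∑ j, a i j * x j < b i

private lemma comb_gt {p q c s t : ℝ} (hs : 0 ≤ s) (ht : 0 ≤ t) (hst : s + t = 1)
    (hp : c < p) (hq : c < q) : c < s * p + t * q := by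
  have hc : s * c + t * c = c := by rw [← add_mul, hst, one_mul]
  rcases eq_or_lt_of_le hs with h | h
  · have ht1 : t = 1 := by linarith
    have h0 : s = 0 := h.symm
    rw [h0, ht1, zero_mul, one_mul, zero_add]
    exact hq
  · have h1 := mul_lt_mul_of_pos_left hp h
    have h2 := mul_le_mul_of_nonneg_left hq.le ht
    linarith

private lemma comb_lt {p q c s t : ℝ} (hs : 0 ≤ s) (ht : 0 ≤ t) (hst : s + t = 1)
    (hp : p < c) (hq : q < c) : s * p + t * q < c := by
  have hc : s * c + t * c = c := by rw [← add_mul, hst, one_mul]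
  rcases eq_or_lt_of_le hs with h | h
  · have ht1 : t = 1 := by linarith
    have h0 : s = 0 := h.symm
    rw [h0, ht1, zero_mul, one_mul, zero_add]
    exact hq
  · have h1 := mul_lt_mul_of_pos_left hp h
    have h2 := mul_le_mul_of_nonneg_left hq.le ht
    linarith

private lemma sum_comb {n : ℕ} (w u v : Fin n → ℝ) (s t : ℝ) :
    ∑ j, w j * (s * u j + t * v j) = s * (∑ j, w j * u j) + t * (∑ j, w j * v j) := by
  rw [Finset.mul_sum, Finset.mul_sum, ← Finset.sum_add_distrib]
  exact Finset.sum_congr rfl fun j _ => by ring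

private lemma restrict {m n : ℕ} (a : Fin (m+1) → Fin (n+1) → ℝ) (b : Fin (m+1) → ℝ)
    (j0 : Fin (n+1)) (hj0 : a (Fin.last m) j0 ≠ 0) (σ' : Fin m → Bool)
    (h1 : Pp a b (Fin.snoc σ' true)) (h2 : Pp a b (Fin.snoc σ' false)) :
    Pp (fun i k => a i.castSucc (j0.succAbove k)
          - a i.castSucc j0 * a (Fin.last m) (j0.succAbove k) / a (Fin.last m) j0)
       (fun i => b i.castSucc - a i.castSucc j0 * b (Fin.last m) / a (Fin.last m) j0) σ' := by
  obtain ⟨u, hu⟩ := h1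
  obtain ⟨v, hv⟩ := h2
  have hu' : b (Fin.last m) < ∑ j, a (Fin.last m) j * u j := by
    simpa [Fin.snoc_last] using hu (Fin.last m)
  have hv' : ∑ j, a (Fin.last m) j * v j < b (Fin.last m) := by
    simpa [Fin.snoc_last] using hv (Fin.last m)
  set c : Fin (n+1) → ℝ := a (Fin.last m) with hc
  set d : ℝ := b (Fin.last m) with hd
  set su : ℝ := ∑ j, c j * u j with hsu
  set sv : ℝ := ∑ j, c j * v j with hsv
  have hlt : sv < su := lt_trans hv' hu'
  set t : ℝ := (d - sv) / (su - sv) with hto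
  have ht0 : 0 ≤ t := div_nonneg (by linarith) (by linarith)
  have ht1 : t ≤ 1 := (div_le_one (by linarith)).2 (by linarith)
  set x : Fin (n+1) → ℝ := fun j => t * u j + (1 - t) * v j with hxdef
  have hlin : ∀ w : Fin (n+1) → ℝ,
      ∑ j, w j * x j = t * (∑ j, w j * u j) + (1 - t) * (∑ j, w j * v j) :=
    fun w => sum_comb w u v t (1 - t)
  have hx : ∑ j, c j * x j = d := by
    rw [hlin c, ← hsu, ← hsv]
    have hts : t * (su - sv) = d - sv := by
      rw [hto]
      exact div_mul_cancel₀ _ (by linarith)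
    linear_combination hts
  have hsigns : ∀ i : Fin m,
      if σ' i then b i.castSucc < ∑ j, a i.castSucc j * x j
      else ∑ j, a i.castSucc j * x j < b i.castSucc := by
    intro i
    have hui := hu i.castSucc
    have hvi := hv i.castSucc
    rw [Fin.snoc_castSucc] at hui hvi
    rw [hlin]
    cases hσ : σ' i with
    | true =>
      rw [hσ, if_pos rfl] at hui hvi
      rw [if_pos rfl]
      exact comb_gt ht0 (by linarith) (by ring) hui hvi
    | false =>
      rw [hσ, if_neg Bool.false_ne_true] at hui hvi
      rw [if_neg Bool.false_ne_true]
      exact comb_lt ht0 (by linarith) (by ring) hui hvi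
  refine ⟨fun k => x (j0.succAbove k), fun i => ?_⟩
  have hsplit : ∀ w : Fin (n+1) → ℝ,
      ∑ j, w j * x j = w j0 * x j0 + ∑ k, w (j0.succAbove k) * x (j0.succAbove k) :=
    fun w => Fin.sum_univ_succAbove (fun j => w j * x j) j0
  have hcs : ∑ k, c (j0.succAbove k) * x (j0.succAbove k) = d - c j0 * x j0 := by
    have := hsplit c
    rw [hx] at this
    linarith
  have e1 : ∑ k, (a i.castSucc (j0.succAbove k)
        - a i.castSucc j0 * c (j0.succAbove k) / c j0) * x (j0.succAbove k)
      = ∑ k, a i.castSucc (j0.succAbove k) * x (j0.succAbove k)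
        - (a i.castSucc j0 / c j0) * ∑ k, c (j0.succAbove k) * x (j0.succAbove k) := by
    rw [Finset.mul_sum, ← Finset.sum_sub_distrib]
    exact Finset.sum_congr rfl fun k _ => by ring
  have hdiff : (∑ k, (a i.castSucc (j0.succAbove k)
        - a i.castSucc j0 * c (j0.succAbove k) / c j0) * x (j0.succAbove k))
        - (b i.castSucc - a i.castSucc j0 * d / c j0)
      = (∑ j, a i.castSucc j * x j) - b i.castSucc := by
    rw [e1, hcs, hsplit (a i.castSucc)]
    field_simp
    ring
  have hs := hsigns i
  cases hσ : σ' i with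
  | true =>
    rw [hσ, if_pos rfl] at hs
    rw [if_pos rfl]
    linarith
  | false =>
    rw [hσ, if_neg Bool.false_ne_true] at hs
    rw [if_neg Bool.false_ne_true]
    linarith

open scoped Classical in
private lemma key : ∀ (m n : ℕ) (a : Fin m → Fin n → ℝ) (b : Fin m → ℝ),
    (Finset.univ.filter (fun σ => Pp a b σ)).card ≤ ∑ i ∈ Finset.range (n + 1), m.choose i := by
  intro m
  induction m with
  | zero =>
    intro n a b
    calc (Finset.univ.filter (fun σ => Pp a b σ)).card
        ≤ (Finset.univ : Finset (Fin 0 → Bool)).card := card_le_card (filter_subset _ _)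
      _ = 1 := by simp
      _ ≤ ∑ i ∈ Finset.range (n + 1), Nat.choose 0 i := by
          have : (0:ℕ) ∈ Finset.range (n+1) := by simp
          calc (1:ℕ) = Nat.choose 0 0 := by simp
            _ ≤ _ := Finset.single_le_sum (fun i _ => Nat.zero_le _) this
  | succ m ih =>
    intro n a b
    match n with
    | 0 =>
      have h1 : (Finset.univ.filter (fun σ => Pp a b σ)).card ≤ 1 := by
        apply Finset.card_le_one.2
        intro σ1 h1 σ2 h2
        rw [Finset.mem_filter] at h1 h2
        obtain ⟨x1, hx1⟩ := h1.2
        obtain ⟨x2, hx2⟩ := h2.2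
        funext i
        have e1 := hx1 i
        have e2 := hx2 i
        have hsum1 : ∑ j : Fin 0, a i j * x1 j = 0 := by simp
        have hsum2 : ∑ j : Fin 0, a i j * x2 j = 0 := by simp
        rw [hsum1] at e1
        rw [hsum2] at e2
        cases hb1 : σ1 i <;> cases hb2 : σ2 i <;> rw [hb1] at e1 <;> rw [hb2] at e2
        all_goals try rfl
        all_goals exfalso
        all_goals simp only [if_pos, if_neg, Bool.false_ne_true, if_true, if_false,
          show (false = true) = False by simp, show (true = true) = True by simp] at e1 e2
        all_goals linarith
      refine h1.trans ?_
      rw [Finset.sum_range_one]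
      simp
    | Nat.succ n' =>
      set S := Finset.univ.filter (fun σ => Pp a b σ) with hS
      have hfib : S.card = ∑ σ' ∈ S.image Fin.init,
          (S.filter (fun σ => Fin.init σ = σ')).card :=
        Finset.card_eq_sum_card_fiberwise (fun σ hσ => Finset.mem_image_of_mem _ hσ)
      set Both : (Fin m → Bool) → Prop :=
        fun σ' => Pp a b (Fin.snoc σ' true) ∧ Pp a b (Fin.snoc σ' false) with hBoth
      have hmem : ∀ σ ∈ S, Pp a b σ := fun σ hσ => (Finset.mem_filter.1 hσ).2
      have hrepr : ∀ σ : Fin (m+1) → Bool, σ = Fin.snoc (Fin.init σ) (σ (Fin.last m)) :=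
        fun σ => (Fin.snoc_init_self σ).symm
      have hfib2 : ∀ σ' ∈ S.image Fin.init,
          (S.filter (fun σ => Fin.init σ = σ')).card ≤ 1 + if Both σ' then 1 else 0 := by
        intro σ' _
        by_cases hb : Both σ'
        · rw [if_pos hb]
          have hsub : S.filter (fun σ => Fin.init σ = σ') ⊆
              {Fin.snoc σ' true, Fin.snoc σ' false} := by
            intro σ hσ
            have h2 := (Finset.mem_filter.1 hσ).2
            have := hrepr σ
            rw [h2] at this
            cases hlast : σ (Fin.last m) <;> rw [hlast] at this <;> simp [this]
          have h2 : ({Fin.snoc σ' true, Fin.snoc σ' false} : Finset (Fin (m+1) → Bool)).card ≤ 2 :=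
            (Finset.card_insert_le _ _).trans (by simp)
          exact (Finset.card_le_card hsub).trans (h2.trans (by norm_num))
        · rw [if_neg hb]
          apply Finset.card_le_one.2
          intro σ1 hσ1 σ2 hσ2
          have e1 := (Finset.mem_filter.1 hσ1).2
          have e2 := (Finset.mem_filter.1 hσ2).2
          have m1 := hmem σ1 (Finset.mem_of_mem_filter _ hσ1)
          have m2 := hmem σ2 (Finset.mem_of_mem_filter _ hσ2)
          have r1 := hrepr σ1; rw [e1] at r1
          have r2 := hrepr σ2; rw [e2] at r2
          by_cases hll : σ1 (Fin.last m) = σ2 (Fin.last m)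
          · rw [r1, r2, hll]
          · exfalso
            apply hb
            cases hl1 : σ1 (Fin.last m) <;> cases hl2 : σ2 (Fin.last m) <;>
              rw [hl1] at r1 <;> rw [hl2] at r2 <;> simp [hl1, hl2] at hll
            · exact ⟨r2 ▸ m2, r1 ▸ m1⟩
            · exact ⟨r1 ▸ m1, r2 ▸ m2⟩
      have himg : S.image Fin.init ⊆ Finset.univ.filter
          (fun σ' => Pp (fun i => a i.castSucc) (fun i => b i.castSucc) σ') := by
        intro σ' h
        obtain ⟨σ, hσ, rfl⟩ := Finset.mem_image.1 h
        obtain ⟨x, hx⟩ := hmem σ hσ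
        refine Finset.mem_filter.2 ⟨Finset.mem_univ _, x, fun i => ?_⟩
        exact hx i.castSucc
      have hcount : S.card ≤ (S.image Fin.init).card +
          ((S.image Fin.init).filter Both).card := by
        rw [hfib]
        calc ∑ σ' ∈ S.image Fin.init, (S.filter (fun σ => Fin.init σ = σ')).card
            ≤ ∑ σ' ∈ S.image Fin.init, (1 + if Both σ' then 1 else 0) :=
              Finset.sum_le_sum hfib2
          _ = (S.image Fin.init).card + ((S.image Fin.init).filter Both).card := by
              rw [Finset.sum_add_distrib, Finset.sum_const, smul_eq_mul, mul_one]
              congr 1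
              rw [Finset.card_filter]
      have hdel : (S.image Fin.init).card ≤ ∑ i ∈ Finset.range (n' + 2), m.choose i :=
        (Finset.card_le_card himg).trans (ih (n'+1) _ _)
      have hres : ((S.image Fin.init).filter Both).card ≤
          ∑ i ∈ Finset.range (n' + 1), m.choose i := by
        by_cases hc : a (Fin.last m) = 0
        · have : (S.image Fin.init).filter Both = ∅ := by
            apply Finset.filter_eq_empty_iff.2
            intro σ' _ hb
            obtain ⟨u, hu⟩ := hb.1
            obtain ⟨v, hv⟩ := hb.2
            have h1 : b (Fin.last m) < ∑ j, a (Fin.last m) j * u j := by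
              simpa [Fin.snoc_last] using hu (Fin.last m)
            have h2 : ∑ j, a (Fin.last m) j * v j < b (Fin.last m) := by
              simpa [Fin.snoc_last] using hv (Fin.last m)
            rw [hc] at h1 h2
            simp at h1 h2
            linarith
          rw [this]
          simp
        · obtain ⟨j0, hj0⟩ := Function.ne_iff.1 hc
          have hsub : (S.image Fin.init).filter Both ⊆ Finset.univ.filter
              (fun σ' => Pp (fun i k => a i.castSucc (j0.succAbove k)
                  - a i.castSucc j0 * a (Fin.last m) (j0.succAbove k) / a (Fin.last m) j0)
                (fun i => b i.castSucc - a i.castSucc j0 * b (Fin.last m) / a (Fin.last m) j0)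
                σ') := by
            intro σ' h
            have hb := (Finset.mem_filter.1 h).2
            exact Finset.mem_filter.2 ⟨Finset.mem_univ _,
              restrict a b j0 hj0 σ' hb.1 hb.2⟩
          exact (Finset.card_le_card hsub).trans (ih n' _ _)
      have pascal : ∑ i ∈ Finset.range (n' + 2), (m+1).choose i
          = ∑ i ∈ Finset.range (n' + 2), m.choose i
            + ∑ i ∈ Finset.range (n' + 1), m.choose i := by
        rw [Finset.sum_range_succ' (fun i => (m+1).choose i) (n'+1),
            Finset.sum_range_succ' (fun i => m.choose i) (n'+1)]
        simp only [Nat.choose_succ_succ, Nat.choose_zero_right, Finset.sum_add_distrib]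
        ring
      calc S.card ≤ (S.image Fin.init).card + ((S.image Fin.init).filter Both).card := hcount
        _ ≤ ∑ i ∈ Finset.range (n' + 2), m.choose i
            + ∑ i ∈ Finset.range (n' + 1), m.choose i := add_le_add hdel hres
        _ = ∑ i ∈ Finset.range (n' + 2), (m+1).choose i := pascal.symm

theorem stmt_8 {m n : ℕ} (a : Fin m → (Fin n → ℝ)) (b : Fin m → ℝ)
    (ha : ∀ i, a i ≠ 0) :
    Finite (ConnectedComponents ↥{x : Fin n → ℝ | ∀ i, ∑ j, a i j * x j ≠ b i}) ∧
    Nat.card (ConnectedComponents ↥{x : Fin n → ℝ | ∀ i, ∑ j, a i j * x j ≠ b i})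
      ≤ ∑ i ∈ Finset.range (n + 1), m.choose i := by
  classical
  set X : Set (Fin n → ℝ) := {x : Fin n → ℝ | ∀ i, ∑ j, a i j * x j ≠ b i} with hX
  set F : X → (Fin m → Bool) := fun x i => decide (b i < ∑ j, a i j * x.1 j) with hF
  have hFP : ∀ x : X, Pp a b (F x) := by
    intro x
    refine ⟨x.1, fun i => ?_⟩
    by_cases h : b i < ∑ j, a i j * x.1 j
    · rw [if_pos (by simp [hF, h])]
      exact h
    · rw [if_neg (by simp [hF, h])]
      exact lt_of_le_of_ne (not_lt.1 h) (x.2 i)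
  -- constancy on connected components
  have hconst : ∀ x y : X, y ∈ connectedComponent x → F x = F y := by
    have main : ∀ (x y : X), y ∈ connectedComponent x → ∀ i,
        b i < ∑ j, a i j * x.1 j → b i < ∑ j, a i j * y.1 j := by
      intro x y hy i hx
      by_contra hyc
      have hy' : ∑ j, a i j * y.1 j < b i := lt_of_le_of_ne (not_lt.1 hyc) (y.2 i)
      have hcont : ContinuousOn (fun z : X => ∑ j, a i j * z.1 j) (connectedComponent x) := by
        apply Continuous.continuousOn
        exact continuous_finset_sum _ fun j _ =>
          continuous_const.mul ((continuous_apply j).comp continuous_subtype_val)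
      have := isPreconnected_connectedComponent.intermediate_value
        hy (mem_connectedComponent) hcont
      have hbmem : b i ∈ Set.Icc ((fun z : X => ∑ j, a i j * z.1 j) y)
          ((fun z : X => ∑ j, a i j * z.1 j) x) := ⟨le_of_lt hy', le_of_lt hx⟩
      obtain ⟨z, _, hzb⟩ := this hbmem
      exact z.2 i hzb
    intro x y hy
    funext i
    have hxy : x ∈ connectedComponent y := by
      rw [← connectedComponent_eq hy]; exact mem_connectedComponent
    apply decide_eq_decide.2
    constructor
    · exact main x y hy i
    · exact main y x hxy i
  have hconv : ∀ x y : X, F x = F y → y ∈ connectedComponent x := by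
    intro x y hxy
    set R : Set (Fin n → ℝ) := {z | ∀ i, if F x i then b i < ∑ j, a i j * z j
        else ∑ j, a i j * z j < b i} with hR
    have hRconv : Convex ℝ R := by
      intro z1 h1 z2 h2 s t hs ht hst
      intro i
      have hlin : ∑ j, a i j * (s * z1 j + t * z2 j)
          = s * (∑ j, a i j * z1 j) + t * (∑ j, a i j * z2 j) := sum_comb _ _ _ _ _
      have e1 := h1 i
      have e2 := h2 i
      have happ : ∀ j, (s • z1 + t • z2) j = s * z1 j + t * z2 j := by
        intro j
        simp [smul_eq_mul]
      have hsum : ∑ j, a i j * (s • z1 + t • z2) j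
          = s * (∑ j, a i j * z1 j) + t * (∑ j, a i j * z2 j) := by
        rw [← hlin]
        exact Finset.sum_congr rfl fun j _ => by rw [happ j]
      cases hσ : F x i <;> rw [hσ] at e1 e2
      · rw [if_neg Bool.false_ne_true] at e1 e2
        rw [if_neg Bool.false_ne_true]
        show ∑ j, a i j * (s • z1 + t • z2) j < b i
        rw [hsum]
        exact comb_lt hs ht hst e1 e2
      · rw [if_pos rfl] at e1 e2
        rw [if_pos rfl]
        show b i < ∑ j, a i j * (s • z1 + t • z2) j
        rw [hsum]
        exact comb_gt hs ht hst e1 e2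
    have hRX : R ⊆ X := by
      intro z hz i
      have h := hz i
      cases hσ : F x i <;> rw [hσ] at h
      · rw [if_neg Bool.false_ne_true] at h
        exact ne_of_lt h
      · rw [if_pos rfl] at h
        exact ne_of_gt h
    have hmemR : ∀ w : X, F w = F x → w.1 ∈ R := by
      intro w hw i
      have hwi : F w i = F x i := by rw [hw]
      cases hσ : F x i
      · rw [if_neg Bool.false_ne_true]
        rw [hσ] at hwi
        have h2 : ¬ (b i < ∑ j, a i j * w.1 j) := by
          have := hwi
          simp only [hF, decide_eq_false_iff_not] at this
          exact this
        exact lt_of_le_of_ne (not_lt.1 h2) (w.2 i)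
      · rw [if_pos rfl]
        rw [hσ] at hwi
        have := hwi
        simp only [hF, decide_eq_true_eq] at this
        exact this
    have hpre : IsPreconnected (Subtype.val ⁻¹' R : Set X) := by
      rw [← Topology.IsInducing.isPreconnected_image Topology.IsInducing.subtypeVal]
      have : Subtype.val '' (Subtype.val ⁻¹' R : Set X) = R := by
        rw [Subtype.image_preimage_coe]
        exact Set.inter_eq_right.2 hRX
      rw [this]
      exact hRconv.isPreconnected
    have hxR : x ∈ (Subtype.val ⁻¹' R : Set X) := hmemR x rfl
    have hyR : y ∈ (Subtype.val ⁻¹' R : Set X) := hmemR y hxy.symm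
    exact hpre.subset_connectedComponent hxR hyR
  -- the injection
  set G : ConnectedComponents X → {σ : Fin m → Bool // Pp a b σ} :=
    fun C => ⟨F C.out, hFP C.out⟩ with hG
  have hGinj : Function.Injective G := by
    intro C D h
    have h2 : F C.out = F D.out := congrArg Subtype.val h
    have h3 : D.out ∈ connectedComponent C.out := hconv _ _ h2
    have h4 : ConnectedComponents.mk (Quotient.out C) = ConnectedComponents.mk (Quotient.out D) :=
      ConnectedComponents.coe_eq_coe.2 (connectedComponent_eq h3)
    have h5 : ConnectedComponents.mk (Quotient.out C) = C := Quotient.out_eq' C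
    have h6 : ConnectedComponents.mk (Quotient.out D) = D := Quotient.out_eq' D
    rw [← h5, ← h6, h4]
  have hfin : Finite (ConnectedComponents X) :=
    Finite.of_injective G hGinj
  refine ⟨hfin, ?_⟩
  have hcard : Nat.card (ConnectedComponents X) ≤ Nat.card {σ : Fin m → Bool // Pp a b σ} :=
    Nat.card_le_card_of_injective G hGinj
  have hcard2 : Nat.card {σ : Fin m → Bool // Pp a b σ}
      = (Finset.univ.filter (fun σ => Pp a b σ)).card := by
    rw [Nat.card_eq_fintype_card, Fintype.card_subtype]
  exact hcard.trans (hcard2 ▸ key m n a b)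
end

section
/- Let S₁, S₂ ∈ {−1,+1}^m be distinct sign vectors, and M an m×n matrix. If some column c of M satisfies sign(c_i) = (S₂)_i for all i, then for any x in the cell of S₁ (i.e., sign((Mx+b)_i) = (S₁)_i for all i), there is a point y differing from x in exactly one coordinate that lies in the cell of S₂. -/
/-!
Move `x` along the column `j₀` of `M`: at `y = x + t • eⱼ₀` the `i`-th affine form is
`(M x + b)ᵢ + t Mᵢⱼ₀`, whose sign is that of `Mᵢⱼ₀ = (S₂)ᵢ` once `t` is large enough.
Only finitely many forms are involved, so a single `t` works for all of them.
-/

open Filter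

theorem Real.eventually_sign_add_mul_eq {a : ℝ} (ha : a ≠ 0) (c : ℝ) :
    ∀ᶠ t in atTop, Real.sign (c + t * a) = Real.sign a := by
  rcases ha.lt_or_gt with hneg | hpos
  · have hbot := tendsto_atBot_add_const_left _ c (tendsto_id.atTop_mul_const_of_neg hneg)
    filter_upwards [hbot.eventually_lt_atBot 0] with t ht
    exact (Real.sign_of_neg ht).trans (Real.sign_of_neg hneg).symm
  · have htop := tendsto_atTop_add_const_left _ c (tendsto_id.atTop_mul_const hpos)
    filter_upwards [htop.eventually_gt_atTop 0] with t ht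
    exact (Real.sign_of_pos ht).trans (Real.sign_of_pos hpos).symm

theorem Real.exists_ne_zero_forall_sign_add_mul_eq {ι : Type*} [Finite ι] (c a : ι → ℝ)
    (ha : ∀ i, a i ≠ 0) : ∃ t ≠ 0, ∀ i, Real.sign (c i + t * a i) = Real.sign (a i) :=
  ((eventually_ne_atTop 0).and
    (eventually_all.2 fun i => Real.eventually_sign_add_mul_eq (ha i) (c i))).exists

theorem Finset.filter_ne_add_single {ι G : Type*} [Fintype ι] [DecidableEq ι] [DecidableEq G]
    [AddGroup G] (x : ι → G) (j : ι) {t : G} (ht : t ≠ 0) :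
    univ.filter (fun k => x k ≠ (x + (Pi.single j t : ι → G)) k) = {j} := by
  ext k
  by_cases hk : k = j
  · simp [hk, ht]
  · simp [hk]

theorem stmt_10_general {m n : ℕ} (M : Matrix (Fin m) (Fin n) ℝ) (b : Fin m → ℝ)
    (S₂ : Fin m → ℝ)
    (hS₂ : ∀ i, S₂ i = 1 ∨ S₂ i = -1)
    (j₀ : Fin n) (hcol : ∀ i, Real.sign (M i j₀) = S₂ i)
    (x : Fin n → ℝ) :
    ∃ y : Fin n → ℝ,
      (Finset.univ.filter fun j => x j ≠ y j).card = 1 ∧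
      ∀ i, Real.sign (M.mulVec y i + b i) = S₂ i := by
  have hcol_ne : ∀ i, M i j₀ ≠ 0 := fun i h => by
    rcases hS₂ i with h₂ | h₂ <;> simp [← hcol i, h] at h₂
  obtain ⟨t, ht, hsign⟩ :=
    Real.exists_ne_zero_forall_sign_add_mul_eq (M.mulVec x + b) (fun i => M i j₀) hcol_ne
  refine ⟨x + Pi.single j₀ t, by rw [Finset.filter_ne_add_single x j₀ ht,
    Finset.card_singleton], fun i => ?_⟩
  rw [← hcol i, ← hsign i, Matrix.mulVec_add, Matrix.mulVec_single]
  simp only [Pi.add_apply, Pi.smul_apply, Matrix.col_apply, MulOpposite.smul_eq_mul_unop,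
    MulOpposite.unop_op]
  congr 1
  ring

theorem stmt_10 {m n : ℕ} (M : Matrix (Fin m) (Fin n) ℝ) (b : Fin m → ℝ)
    (S₁ S₂ : Fin m → ℝ)
    (hS₁ : ∀ i, S₁ i = 1 ∨ S₁ i = -1) (hS₂ : ∀ i, S₂ i = 1 ∨ S₂ i = -1)
    (hne : S₁ ≠ S₂)
    (j₀ : Fin n) (hcol : ∀ i, Real.sign (M i j₀) = S₂ i)
    (x : Fin n → ℝ) (hx : ∀ i, Real.sign (M.mulVec x i + b i) = S₁ i) :
    ∃ y : Fin n → ℝ,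
      (Finset.univ.filter fun j => x j ≠ y j).card = 1 ∧
      ∀ i, Real.sign (M.mulVec y i + b i) = S₂ i :=
  stmt_10_general M b S₂ hS₂ j₀ hcol x
end
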